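/- arXiv:1304.1169 — 2 statements merged into one kernel-verified Lean document; each statement's English description precedes it below -/
import Mathlib

section
/- Let G be a labeled acyclic locally finite digraph such that the ab-index Ψ([x,y]) of every interval [x,y] with x < y lies in the subring Z⟨c,d⟩ generated by c = a+b and d = ab+ba. Then for every interval [x,y] and every nonnegative integer k, the number of rising paths from x to y of length k equals the number of falling paths from x to y of length k. -/
/-- A labeled digraph: vertices, (multi-)edges with tail, head and labels in a set
`Λ` carrying a relation `rel`. -/
structure LDigraph where
  V : Type
  E : Type
  Λ : Type
  tail : E → V
  head : E → V
  lab : E → Λ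
  rel : Λ → Λ → Prop

namespace LDigraph

variable (G : LDigraph)

/-- `IsPath x p y`: `p` is a directed path from `x` to `y` (the empty path requires `x = y`). -/
def IsPath : G.V → List G.E → G.V → Prop
  | x, [], y => x = y
  | x, e :: p, y => G.tail e = x ∧ IsPath (G.head e) p y

/-- `x ≤ y`: there is a directed path from `x` to `y`. -/
def Reaches (x y : G.V) : Prop := ∃ p, G.IsPath x p y

/-- `x < y` in the order induced by directed paths. -/
def Lt (x y : G.V) : Prop := G.Reaches x y ∧ x ≠ y

/-- The digraph has no (nonempty) directed cycles. -/
def Acyclic : Prop := ∀ (x : G.V) (p : List G.E), p ≠ [] → ¬ G.IsPath x p x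

/-- There are finitely many directed paths between any two vertices. -/
def LocallyFinite : Prop := ∀ x y : G.V, {p | G.IsPath x p y}.Finite

/-- A rising path: any two consecutive edge labels are related. -/
def Rising (p : List G.E) : Prop := List.Chain' (fun e f => G.rel (G.lab e) (G.lab f)) p

/-- A falling path: no two consecutive edge labels are related. -/
def Falling (p : List G.E) : Prop := List.Chain' (fun e f => ¬ G.rel (G.lab e) (G.lab f)) p

open Classical in
/-- The descent word `u(p)` of a path, as an `ab`-monomial in
`Z⟨a,b⟩ = MonoidAlgebra ℤ (FreeMonoid (Fin 2))`; the letter `0` is `a` (ascent) and the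
letter `1` is `b` (descent). -/
noncomputable def word (p : List G.E) : MonoidAlgebra ℤ (FreeMonoid (Fin 2)) :=
  MonoidAlgebra.of ℤ (FreeMonoid (Fin 2)) (FreeMonoid.ofList
    ((p.zip p.tail).map fun q => if G.rel (G.lab q.1) (G.lab q.2) then (0 : Fin 2) else 1))

/-- The `ab`-index `Ψ([x,y]) = Σ_p u(p)`, summing descent words over all directed
paths from `x` to `y`. -/
noncomputable def Psi (x y : G.V) : MonoidAlgebra ℤ (FreeMonoid (Fin 2)) :=
  ∑ᶠ (p : List G.E) (_ : G.IsPath x p y), G.word p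

end LDigraph

/-- The generator `a` of `Z⟨a,b⟩`. -/
noncomputable def av : MonoidAlgebra ℤ (FreeMonoid (Fin 2)) :=
  MonoidAlgebra.of ℤ (FreeMonoid (Fin 2)) (FreeMonoid.of 0)
/-- The generator `b` of `Z⟨a,b⟩`. -/
noncomputable def bv : MonoidAlgebra ℤ (FreeMonoid (Fin 2)) :=
  MonoidAlgebra.of ℤ (FreeMonoid (Fin 2)) (FreeMonoid.of 1)
/-- `c = a + b`. -/
noncomputable def cv := av + bv
/-- `d = ab + ba`. -/
noncomputable def dv := av * bv + bv * av

/-! The coefficient of a monomial `w` in `Ψ([x,y])` counts the paths from `x` to `y` whose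
descent word is `w`. For `x ≠ y`, the rising paths of length `k + 1` are exactly those with descent
word `a^k`, and the falling ones those with descent word `b^k`. The ring automorphism of `Z⟨a,b⟩`
exchanging `a` and `b` fixes `c` and `d`, hence all of `Z⟨c,d⟩`, so for `Ψ([x,y]) ∈ Z⟨c,d⟩` the
coefficients of `a^k` and `b^k` agree. -/

theorem List.map_zip_tail_eq_replicate_iff {α β : Type*} (f : α → α → β) (b : β) (l : List α) :
    (l.zip l.tail).map (fun q => f q.1 q.2) = List.replicate (l.length - 1) b ↔
      l.IsChain (fun x y => f x y = b) := by
  induction l using List.twoStepInduction <;> simp_all [List.replicate_succ]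

noncomputable def swapAB :
    MonoidAlgebra ℤ (FreeMonoid (Fin 2)) →+* MonoidAlgebra ℤ (FreeMonoid (Fin 2)) :=
  MonoidAlgebra.mapDomainRingHom ℤ (FreeMonoid.map Fin.rev)

theorem swapAB_of (w : FreeMonoid (Fin 2)) :
    swapAB (MonoidAlgebra.of ℤ _ w) = MonoidAlgebra.of ℤ _ (FreeMonoid.map Fin.rev w) := by
  simp [swapAB]

theorem coeff_swapAB (X : MonoidAlgebra ℤ (FreeMonoid (Fin 2))) (w : List (Fin 2)) :
    (swapAB X).coeff (FreeMonoid.ofList (w.map Fin.rev)) = X.coeff (FreeMonoid.ofList w) := by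
  have hinj : Function.Injective (FreeMonoid.map (Fin.rev : Fin 2 → Fin 2)) := fun u v h =>
    FreeMonoid.toList.injective <| List.map_injective_iff.mpr Fin.rev_injective <| by
      simpa only [FreeMonoid.toList_map] using congrArg FreeMonoid.toList h
  rw [swapAB, MonoidAlgebra.mapDomainRingHom_apply, MonoidAlgebra.coeff_mapDomain]
  exact Finsupp.mapDomain_apply hinj X.coeff (FreeMonoid.ofList w)

theorem swapAB_eq_self_of_mem_closure {X : MonoidAlgebra ℤ (FreeMonoid (Fin 2))}
    (hX : X ∈ Subring.closure ({cv, dv} : Set (MonoidAlgebra ℤ (FreeMonoid (Fin 2))))) :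
    swapAB X = X := by
  have hav : swapAB av = bv := swapAB_of _
  have hbv : swapAB bv = av := swapAB_of _
  suffices Subring.closure {cv, dv} ≤ swapAB.eqLocus (RingHom.id _) from this hX
  rw [Subring.closure_le, Set.insert_subset_iff, Set.singleton_subset_iff]
  constructor
  · simp [cv, hav, hbv, add_comm]
  · simp [dv, hav, hbv, add_comm]

theorem coeff_replicate_zero_eq_coeff_replicate_one {X : MonoidAlgebra ℤ (FreeMonoid (Fin 2))}
    (hX : X ∈ Subring.closure ({cv, dv} : Set (MonoidAlgebra ℤ (FreeMonoid (Fin 2))))) (k : ℕ) :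
    X.coeff (FreeMonoid.ofList (List.replicate k 0)) =
      X.coeff (FreeMonoid.ofList (List.replicate k 1)) := by
  rw [← coeff_swapAB, swapAB_eq_self_of_mem_closure hX, List.map_replicate]
  rfl

namespace LDigraph

variable (G : LDigraph)

open Classical in
noncomputable def descentLetter (e f : G.E) : Fin 2 := if G.rel (G.lab e) (G.lab f) then 0 else 1

noncomputable def descents (p : List G.E) : List (Fin 2) :=
  (p.zip p.tail).map fun q => G.descentLetter q.1 q.2

theorem rising_iff (p : List G.E) :
    G.Rising p ↔ p.IsChain fun e f => G.descentLetter e f = 0 := by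
  show p.IsChain _ ↔ _
  simp [descentLetter]

theorem falling_iff (p : List G.E) :
    G.Falling p ↔ p.IsChain fun e f => G.descentLetter e f = 1 := by
  show p.IsChain _ ↔ _
  simp [descentLetter]

theorem descents_eq_replicate_iff {p : List G.E} (hp : p ≠ []) (i : Fin 2) (k : ℕ) :
    G.descents p = List.replicate k i ↔
      p.IsChain (fun e f => G.descentLetter e f = i) ∧ p.length = k + 1 := by
  have hlen : (G.descents p).length + 1 = p.length := by
    have := List.length_pos_iff.mpr hp
    simp only [descents, List.length_map, List.length_zip, List.length_tail]
    omega
  rw [← List.map_zip_tail_eq_replicate_iff]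
  constructor
  · intro h
    have hk : p.length = k + 1 := by rw [← hlen, h, List.length_replicate]
    exact ⟨by rwa [hk], hk⟩
  · rintro ⟨h, hk⟩
    rwa [hk] at h

variable {G}

theorem setOf_isPath_descents_eq_replicate {x y : G.V} (hxy : x ≠ y) (i : Fin 2) (k : ℕ) :
    {p | G.IsPath x p y ∧ G.descents p = List.replicate k i} =
      {p | G.IsPath x p y ∧ p.IsChain (fun e f => G.descentLetter e f = i) ∧
        p.length = k + 1} := by
  ext p
  refine and_congr_right fun hp => G.descents_eq_replicate_iff ?_ i k
  rintro rfl
  exact hxy hp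

theorem coeff_Psi {x y : G.V} (hfin : {p | G.IsPath x p y}.Finite) (w : List (Fin 2)) :
    (G.Psi x y).coeff (FreeMonoid.ofList w) = {p | G.IsPath x p y ∧ G.descents p = w}.ncard := by
  classical
  have hPsi : G.Psi x y = ∑ p ∈ hfin.toFinset, G.word p := by
    rw [Psi, ← finsum_mem_coe_finset, hfin.coe_toFinset]
    rfl
  have hword (p : List G.E) :
      (G.word p).coeff (FreeMonoid.ofList w) = if G.descents p = w then 1 else 0 := by
    change (MonoidAlgebra.of ℤ _ (FreeMonoid.ofList (G.descents p))).coeff _ = _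
    simp [MonoidAlgebra.of_apply, Finsupp.single_apply, eq_comm]
  rw [hPsi, MonoidAlgebra.coeff_sum, Finset.sum_apply', Finset.sum_congr rfl fun p _ => hword p,
    Finset.sum_boole, ← Set.ncard_coe_finset]
  congr
  ext p
  simp

end LDigraph

theorem rising_eq_falling_of_cd_general (G : LDigraph)
    (hlocfin : G.LocallyFinite)
    (hcd : ∀ x y : G.V, G.Lt x y →
      G.Psi x y ∈ Subring.closure ({cv, dv} : Set (MonoidAlgebra ℤ (FreeMonoid (Fin 2))))) :
    ∀ x y : G.V, G.Lt x y → ∀ k : ℕ,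
      {p | G.IsPath x p y ∧ G.Rising p ∧ p.length = k}.ncard =
        {p | G.IsPath x p y ∧ G.Falling p ∧ p.length = k}.ncard := by
  intro x y hxy k
  simp only [G.rising_iff, G.falling_iff]
  cases k with
  | zero =>
    congr 1
    ext p
    constructor <;> rintro ⟨hp, -, hlen⟩ <;>
      exact ⟨hp, by simp [List.length_eq_zero_iff.mp hlen], hlen⟩
  | succ k =>
    rw [← LDigraph.setOf_isPath_descents_eq_replicate hxy.2,
      ← LDigraph.setOf_isPath_descents_eq_replicate hxy.2, ← Nat.cast_inj (R := ℤ),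
      ← LDigraph.coeff_Psi (hlocfin x y), ← LDigraph.coeff_Psi (hlocfin x y)]
    exact coeff_replicate_zero_eq_coeff_replicate_one (hcd x y hxy) k

/-- Theorem 4.6, (iii) ⟹ (i): if the `ab`-index of every interval lies in `Z⟨c,d⟩`,
then for every interval and every length `k`, the number of rising paths of length `k`
equals the number of falling paths of length `k`. -/
theorem rising_eq_falling_of_cd (G : LDigraph) (hacyclic : G.Acyclic)
    (hlocfin : G.LocallyFinite)
    (hcd : ∀ x y : G.V, G.Lt x y →
      G.Psi x y ∈ Subring.closure ({cv, dv} : Set (MonoidAlgebra ℤ (FreeMonoid (Fin 2))))) :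
    ∀ x y : G.V, G.Lt x y → ∀ k : ℕ,
      {p | G.IsPath x p y ∧ G.Rising p ∧ p.length = k}.ncard =
        {p | G.IsPath x p y ∧ G.Falling p ∧ p.length = k}.ncard :=
  rising_eq_falling_of_cd_general G hlocfin hcd
end

section
/- Let G be a labeled acyclic locally finite digraph such that for every interval [x,y] and every even positive integer k, the number of rising paths from x to y of length k equals the number of falling paths from x to y of length k. Then for every interval [x,y] with x < y, the ab-index Ψ([x,y]) lies in Z⟨c,d⟩, i.e., it is a polynomial with integer coefficients in c = a+b and d = ab+ba. -/
/-!
Write `Ψₖ(x,y)` for the part of the `ab`-index coming from paths of length `k`, and `rₖ`, `fₖ`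
for the numbers of rising and falling paths. Expanding every letter of the initial rising run of
a path as `a = (a - b) + b` gives
`Ψₖ(x,y) = rₖ(x,y) (a-b)^(k-1) + ∑ₘ (a-b)^m b ∑_z r_{m+1}(x,z) Ψ_{k-m-1}(z,y)`,
and symmetrically for falling runs with `a` and `b` swapped. Under the character `a ↦ 1, b ↦ -1`
the two expansions force `rₖ = fₖ` also for odd `k` (by induction on `k`, together with the
vanishing of the character on `Ψₖ` for even `k`). Once `rₖ = fₖ` for all `k`, the sum of the two
expansions writes `2 Ψₖ` in terms of `c`, `(a-b)^2 = c^2 - 2d` and shorter `Ψ`'s, so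
`2 Ψₖ ∈ ℤ⟨c,d⟩`. Finally `ℤ⟨c,d⟩` is saturated in `ℤ⟨a,b⟩`: the `cd`-monomials are
unitriangular for the lexicographic order, the least word of a monomial being obtained by
`c ↦ a`, `d ↦ ab`.
-/

local notation "𝒜" => MonoidAlgebra ℤ (FreeMonoid (Fin 2))

local notation "ℤ⟨c,d⟩" => Subring.closure (insert cv (singleton dv) : Set 𝒜)

theorem List.append_lt_append_of_length_eq {α : Type*} [LinearOrder α] {u₁ u₂ : List α}
    (v₁ v₂ : List α) (hl : u₁.length = u₂.length) (hu : u₁ < u₂) : u₁ ++ v₁ < u₂ ++ v₂ := by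
  induction u₁ generalizing u₂ with
  | nil => cases u₂ <;> simp_all
  | cons a t ih =>
    obtain _ | ⟨b, s⟩ := u₂
    · simp at hl
    rcases List.cons_lt_cons_iff.1 hu with hab | ⟨rfl, hts⟩
    · exact List.cons_lt_cons_iff.2 (Or.inl hab)
    · exact List.cons_lt_cons_iff.2 (Or.inr ⟨rfl, ih (by simpa using hl) hts⟩)

theorem List.append_le_append_of_length_eq {α : Type*} [LinearOrder α] {u₁ u₂ v₁ v₂ : List α}
    (hl : u₁.length = u₂.length) (hu : u₁ ≤ u₂) (hv : v₁ ≤ v₂) : u₁ ++ v₁ ≤ u₂ ++ v₂ := by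
  rcases hu.lt_or_eq with hu | rfl
  · exact (append_lt_append_of_length_eq v₁ v₂ hl hu).le
  · rcases hv.lt_or_eq with hv | rfl
    · exact le_of_lt (List.Lex.append_left _ hv u₁)
    · rfl

theorem MonoidAlgebra.mem_span_of_smul_mem_of_unitriangular {R M ι β : Type*} [Ring R]
    [NoZeroDivisors R] [LinearOrder β] {v : ι → MonoidAlgebra R M} (lead : ι → M) (key : ι → β)
    (hlead : ∀ i, (v i).coeff (lead i) = 1)
    (htri : ∀ i j, i ≠ j → (v i).coeff (lead j) ≠ 0 → key i < key j)
    {n : R} (hn : n ≠ 0) {x : MonoidAlgebra R M} (hx : n • x ∈ Submodule.span R (Set.range v)) :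
    x ∈ Submodule.span R (Set.range v) := by
  classical
  obtain ⟨c, hc⟩ := Finsupp.mem_span_range_iff_exists_finsupp.1 hx
  suffices ∀ (T : Finset ι) (κ : ι → R) (x : MonoidAlgebra R M),
      n • x = ∑ i ∈ T, κ i • v i → x ∈ Submodule.span R (Set.range v) from
    this c.support c x hc.symm
  intro T
  induction T using Finset.strongInduction with
  | H T ih =>
  intro κ x hx
  rcases T.eq_empty_or_nonempty with rfl | hT
  · suffices x = 0 by simp [this]
    ext w
    simpa [hn] using congr(($hx).coeff w)
  obtain ⟨i₀, hi₀, hmin⟩ := T.exists_min_image key hT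
  have hcoeff : κ i₀ = n * x.coeff (lead i₀) := by
    have h := congr(($hx).coeff (lead i₀))
    simp only [MonoidAlgebra.coeff_smul, MonoidAlgebra.coeff_sum, Finsupp.smul_apply,
      Finset.sum_apply', smul_eq_mul] at h
    rw [h, Finset.sum_eq_single_of_mem i₀ hi₀, hlead, mul_one]
    intro i hi hne
    by_contra h'
    exact (hmin i hi).not_gt (htri i i₀ hne (right_ne_zero_of_mul h'))
  have hrest : n • (x - x.coeff (lead i₀) • v i₀) = ∑ i ∈ T.erase i₀, κ i • v i := by
    rw [Finset.sum_erase_eq_sub hi₀, ← hx, hcoeff, smul_sub, smul_smul]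
  simpa using add_mem (ih _ (Finset.erase_ssubset hi₀) κ _ hrest)
    (Submodule.smul_mem _ (x.coeff (lead i₀)) (Submodule.subset_span ⟨i₀, rfl⟩))

noncomputable def cdMonomial : FreeMonoid (Fin 2) →* 𝒜 := FreeMonoid.lift ![cv, dv]

def leadWord : FreeMonoid (Fin 2) →* FreeMonoid (Fin 2) :=
  FreeMonoid.lift ![.of 0, .of 0 * .of 1]

theorem mem_closure_iff_mem_span_cdMonomial {x : 𝒜} :
    x ∈ ℤ⟨c,d⟩ ↔ x ∈ Submodule.span ℤ (Set.range cdMonomial) := by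
  rw [Subring.mem_closure_iff, ← Submodule.span_int_eq_addSubgroupClosure,
    ← Matrix.range_cons_cons_empty cv dv ![], ← FreeMonoid.mrange_lift]
  rfl

theorem cdMonomial_of (i : Fin 2) :
    cdMonomial (.of i) = MonoidAlgebra.single (leadWord (.of i)) 1
      + MonoidAlgebra.single (![.of 1, .of 1 * .of 0] i) 1 := by
  fin_cases i <;> simp [cdMonomial, leadWord, cv, dv, av, bv, MonoidAlgebra.single_mul_single]

theorem length_eq_and_leadWord_le_of_mem_support_of {i : Fin 2} {y : FreeMonoid (Fin 2)}
    (hy : y ∈ (cdMonomial (.of i)).coeff.support) :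
    (leadWord (.of i)).toList.length = y.toList.length ∧ (leadWord (.of i)).toList ≤ y.toList := by
  classical
  rw [cdMonomial_of, MonoidAlgebra.coeff_add] at hy
  rcases Finset.mem_union.1 (Finsupp.support_add hy) with hy | hy <;>
  · rw [MonoidAlgebra.coeff_single] at hy
    rw [Finset.mem_singleton.1 (Finsupp.support_single_subset hy)]
    fin_cases i <;> decide

theorem leadWord_le_of_mem_support (w : FreeMonoid (Fin 2)) :
    ∀ u ∈ (cdMonomial w).coeff.support, (leadWord w).toList ≤ u.toList := by
  classical
  induction w using FreeMonoid.inductionOn' with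
  | one =>
    intro u hu
    rw [map_one, MonoidAlgebra.one_def, MonoidAlgebra.coeff_single] at hu
    rw [Finset.mem_singleton.1 (Finsupp.support_single_subset hu)]
    rfl
  | of_mul i w ih =>
    intro u hu
    rw [map_mul] at hu
    obtain ⟨y, hy, z, hz, rfl⟩ := Finset.mem_mul.1 (MonoidAlgebra.support_coeff_mul_subset _ _ hu)
    obtain ⟨hl, hle⟩ := length_eq_and_leadWord_le_of_mem_support_of hy
    rw [map_mul, FreeMonoid.toList_mul, FreeMonoid.toList_mul]
    exact List.append_le_append_of_length_eq hl hle (ih z hz)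

theorem coeff_cdMonomial_leadWord (w : FreeMonoid (Fin 2)) :
    (cdMonomial w).coeff (leadWord w) = 1 := by
  induction w using FreeMonoid.inductionOn' with
  | one => simp [MonoidAlgebra.one_def]
  | of_mul i w ih =>
    rw [map_mul, map_mul, cdMonomial_of, add_mul, MonoidAlgebra.coeff_add, Finsupp.add_apply,
      MonoidAlgebra.coeff_single_mul_mul, one_mul, ih,
      MonoidAlgebra.coeff_single_mul_of_forall_mul_ne, add_zero]
    intro d h
    have := congrArg FreeMonoid.toList h
    fin_cases i <;> simp [leadWord] at this

theorem leadWord_injective : Function.Injective leadWord := by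
  have head_ne_one (w : FreeMonoid (Fin 2)) : (leadWord w).toList.head? ≠ some 1 := by
    cases w with
    | one => simp
    | of_mul i w => fin_cases i <;> simp [leadWord]
  intro w₁ w₂ h
  replace h := congrArg FreeMonoid.toList h
  induction w₁ using FreeMonoid.inductionOn' generalizing w₂ with
  | one =>
    cases w₂ with
    | one => rfl
    | of_mul j w₂ => fin_cases j <;> simp [leadWord] at h
  | of_mul i w₁ ih =>
    cases w₂ with
    | one => fin_cases i <;> simp [leadWord] at h
    | of_mul j w₂ =>
      fin_cases i <;> fin_cases j <;> simp [leadWord] at h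
      · rw [ih h]
      · exact (head_ne_one w₁ (by simp [leadWord, h])).elim
      · exact (head_ne_one w₂ (by simp [leadWord, ← h])).elim
      · rw [ih h]

theorem mem_closure_cv_dv_of_smul_mem {n : ℤ} (hn : n ≠ 0) {x : 𝒜} (h : n • x ∈ ℤ⟨c,d⟩) :
    x ∈ ℤ⟨c,d⟩ := by
  rw [mem_closure_iff_mem_span_cdMonomial] at h ⊢
  refine MonoidAlgebra.mem_span_of_smul_mem_of_unitriangular leadWord
    (fun w ↦ (leadWord w).toList) coeff_cdMonomial_leadWord (fun i j hij hne ↦ ?_) hn h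
  refine lt_of_le_of_ne (leadWord_le_of_mem_support i _ (Finsupp.mem_support_iff.2 hne)) ?_
  exact fun h ↦ hij (leadWord_injective (FreeMonoid.toList.injective h))

theorem sub_pow_mem_of_even {n : ℕ} (hn : Even n) : (av - bv) ^ n ∈ ℤ⟨c,d⟩ := by
  obtain ⟨k, rfl⟩ := hn
  have hsq : (av - bv) ^ 2 = cv * cv - dv - dv := by
    simp only [cv, dv]
    noncomm_ring
  rw [← two_mul, pow_mul, hsq]
  have hc : cv ∈ ℤ⟨c,d⟩ := Subring.subset_closure (by simp)
  have hd : dv ∈ ℤ⟨c,d⟩ := Subring.subset_closure (by simp)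
  exact pow_mem (sub_mem (sub_mem (mul_mem hc hc) hd) hd) k

theorem sub_pow_add_sub_pow_mem (n : ℕ) : (av - bv) ^ n + (bv - av) ^ n ∈ ℤ⟨c,d⟩ := by
  rw [← neg_sub av bv]
  rcases Nat.even_or_odd n with hn | hn
  · rw [hn.neg_pow]
    exact add_mem (sub_pow_mem_of_even hn) (sub_pow_mem_of_even hn)
  · rw [hn.neg_pow, add_neg_cancel]
    exact zero_mem _

theorem sub_pow_mul_add_sub_pow_mul_mem (m : ℕ) :
    (av - bv) ^ m * bv + (bv - av) ^ m * av ∈ ℤ⟨c,d⟩ := by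
  rw [← neg_sub av bv]
  rcases Nat.even_or_odd m with hm | hm
  · rw [hm.neg_pow, ← mul_add, add_comm bv]
    exact mul_mem (sub_pow_mem_of_even hm) (Subring.subset_closure (by simp [cv]))
  · rw [hm.neg_pow, neg_mul, ← sub_eq_add_neg, ← mul_sub, ← neg_sub av bv, mul_neg, ← pow_succ]
    exact neg_mem (sub_pow_mem_of_even hm.add_one)

noncomputable def abSign : 𝒜 →ₐ[ℤ] ℤ := MonoidAlgebra.lift ℤ ℤ _ (FreeMonoid.lift ![1, -1])

@[simp] theorem abSign_av : abSign av = 1 := by simp [abSign, av]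

@[simp] theorem abSign_bv : abSign bv = -1 := by simp [abSign, bv]

-- `hr` and `hf` are the ascent and descent expansions of `Ψₖ` under `abSign`.
theorem one_add_neg_one_pow_mul_eq {k : ℕ} (hk : 1 ≤ k) {s r f : ℤ} (T : ℕ → ℤ)
    (hT : ∀ m < k - 1, Odd (m + k) → T m = 0)
    (hr : s = r * 2 ^ (k - 1) - ∑ m ∈ Finset.range (k - 1), 2 ^ m * T m)
    (hf : s = f * (-2) ^ (k - 1) + ∑ m ∈ Finset.range (k - 1), (-2) ^ m * T m) :
    (1 + (-1) ^ k) * s = (-1) ^ k * 2 ^ (k - 1) * (r - f) := by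
  have hsum : ∑ m ∈ Finset.range (k - 1), (-2) ^ m * T m
      = (-1) ^ k * ∑ m ∈ Finset.range (k - 1), 2 ^ m * T m := by
    rw [Finset.mul_sum]
    refine Finset.sum_congr rfl fun m hm ↦ ?_
    rcases Nat.even_or_odd (m + k) with h | h
    · have hmk : (-1 : ℤ) ^ m = (-1) ^ k := by
        rcases Nat.even_or_odd k with hk' | hk'
        · rw [hk'.neg_one_pow, ((Nat.even_add.1 h).2 hk').neg_one_pow]
        · have hm : Odd m := Nat.not_even_iff_odd.1 fun hm ↦
            Nat.not_even_iff_odd.2 hk' ((Nat.even_add.1 h).1 hm)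
          rw [hk'.neg_one_pow, hm.neg_one_pow]
      rw [neg_pow, hmk, mul_assoc]
    · rw [hT m (Finset.mem_range.1 hm) h, mul_zero, mul_zero, mul_zero]
  obtain ⟨j, rfl⟩ := Nat.exists_eq_add_of_le' hk
  rw [hsum, neg_pow] at hf
  simp only [Nat.add_sub_cancel] at hf hr ⊢
  linear_combination hf + (-1) ^ (j + 1) * hr

namespace LDigraph

open Finset

open scoped Classical

variable {G : LDigraph}

def ascent (G : LDigraph) (e f : G.E) : Prop := G.rel (G.lab e) (G.lab f)

def descent (G : LDigraph) (e f : G.E) : Prop := ¬G.ascent e f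

noncomputable def letter (G : LDigraph) (e f : G.E) : 𝒜 := if G.ascent e f then av else bv

theorem word_cons_cons (e f : G.E) (t : List G.E) :
    G.word (e :: f :: t) = G.letter e f * G.word (f :: t) := by
  simp only [word, letter, ascent, List.tail_cons, List.zip_cons_cons, List.map_cons,
    FreeMonoid.ofList_cons, map_mul]
  split_ifs with h <;> simp [h, av, bv]

theorem word_of_length_le_one {p : List G.E} (hp : p.length ≤ 1) : G.word p = 1 := by
  match p, hp with
  | [], _ => rfl
  | [_], _ => rfl

def target (G : LDigraph) (x : G.V) (p : List G.E) : G.V := p.foldl (fun _ e ↦ G.head e) x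

theorem IsPath.target_eq {x y : G.V} {p : List G.E} (h : G.IsPath x p y) : G.target x p = y := by
  induction p generalizing x with
  | nil => exact h
  | cons e p ih => exact ih h.2

theorem isPath_append_iff {x y : G.V} {p q : List G.E} :
    G.IsPath x (p ++ q) y ↔ G.IsPath x p (G.target x p) ∧ G.IsPath (G.target x p) q y := by
  induction p generalizing x with
  | nil => simp [IsPath, target]
  | cons e p ih =>
    simp only [List.cons_append, IsPath, target, List.foldl_cons] at ih ⊢
    rw [ih, and_assoc]

-- Each letter `u` of the initial `P`-chain is written as `(u - v) + v`; the summand `m` collects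
-- the words whose first `v` sits at position `m`.
theorem word_eq_expansion {P : G.E → G.E → Prop} {u v : 𝒜}
    (hP : ∀ e f, G.letter e f = if P e f then u else v) (p : List G.E) :
    G.word p = (if p.IsChain P then (u - v) ^ (p.length - 1) else 0)
      + ∑ m ∈ range (p.length - 1), (u - v) ^ m * v *
          (if (p.take (m + 1)).IsChain P then G.word (p.drop (m + 1)) else 0) := by
  induction p with
  | nil => simp [word_of_length_le_one]
  | cons e p ih =>
    cases p with
    | nil => simp [word_of_length_le_one]
    | cons f t =>
      simp only [List.length_cons, Nat.add_sub_cancel] at ih ⊢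
      rw [Finset.sum_range_succ', word_cons_cons, hP]
      by_cases hef : P e f
      · simp only [hef, if_true, List.isChain_cons_cons, true_and, List.take_succ_cons,
          List.drop_succ_cons, pow_succ', pow_zero, one_mul, List.take_zero, List.isChain_singleton]
        simp only [List.take_succ_cons, List.drop_succ_cons] at ih
        calc u * G.word (f :: t)
            _ = (u - v) * G.word (f :: t) + v * G.word (f :: t) := by noncomm_ring
            _ = _ := by
              nth_rewrite 1 [ih]
              simp only [mul_add, Finset.mul_sum, mul_ite, mul_zero, mul_assoc, List.drop_zero]
              abel
      · simp [hef, List.isChain_cons_cons, List.take_succ_cons]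

def EvenBalanced (G : LDigraph) : Prop :=
  ∀ x y : G.V, G.Lt x y → ∀ k : ℕ, Even k → 0 < k →
    {p | G.IsPath x p y ∧ G.Rising p ∧ p.length = k}.ncard =
      {p | G.IsPath x p y ∧ G.Falling p ∧ p.length = k}.ncard

variable (hfin : G.LocallyFinite)

noncomputable def paths (x y : G.V) : Finset (List G.E) := (hfin x y).toFinset

noncomputable def pathsOfLength (k : ℕ) (x y : G.V) : Finset (List G.E) :=
  (paths hfin x y).filter (·.length = k)

noncomputable def psiOfLength (k : ℕ) (x y : G.V) : 𝒜 := ∑ p ∈ pathsOfLength hfin k x y, G.word p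

noncomputable def chainCount (P : G.E → G.E → Prop) (k : ℕ) (x y : G.V) : ℕ :=
  ((pathsOfLength hfin k x y).filter (·.IsChain P)).card

noncomputable def midpoints (x y : G.V) : Finset G.V :=
  (paths hfin x y).biUnion fun p ↦ (range (p.length + 1)).image fun j ↦ G.target x (p.take j)

variable {hfin} in
theorem mem_pathsOfLength {k : ℕ} {x y : G.V} {p : List G.E} :
    p ∈ pathsOfLength hfin k x y ↔ G.IsPath x p y ∧ p.length = k := by
  rw [pathsOfLength, mem_filter, paths, Set.Finite.mem_toFinset, Set.mem_ofPred_eq]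

theorem sum_word_drop_eq (P : G.E → G.E → Prop) {j k : ℕ} (hjk : j ≤ k) (x y : G.V) :
    ∑ p ∈ (pathsOfLength hfin k x y).filter (fun p ↦ (p.take j).IsChain P), G.word (p.drop j)
      = ∑ z ∈ midpoints hfin x y, chainCount hfin P j x z • psiOfLength hfin (k - j) z y := by
  simp only [chainCount, psiOfLength, ← sum_const, ← sum_product', sum_sigma']
  refine sum_nbij' (fun p ↦ ⟨G.target x (p.take j), p.take j, p.drop j⟩) (fun a ↦ a.2.1 ++ a.2.2)
    ?_ ?_ (fun p _ ↦ List.take_append_drop j p) ?_ (fun _ _ ↦ rfl)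
  · intro p hp
    simp only [mem_filter, mem_pathsOfLength] at hp
    obtain ⟨⟨hpath, hlen⟩, hchain⟩ := hp
    have hsplit := hpath
    rw [← List.take_append_drop j p, isPath_append_iff] at hsplit
    simp only [mem_sigma, mem_product, mem_filter, mem_pathsOfLength, midpoints, mem_biUnion,
      mem_image, mem_range, List.length_take, List.length_drop]
    exact ⟨⟨p, (hfin x y).mem_toFinset.2 hpath, j, by omega, rfl⟩, ⟨⟨hsplit.1, by omega⟩, hchain⟩,
      hsplit.2, by omega⟩
  · rintro ⟨z, q, r⟩ ha
    simp only [mem_sigma, mem_product, mem_filter, mem_pathsOfLength] at ha ⊢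
    obtain ⟨-, ⟨⟨hq, hqlen⟩, hchain⟩, hr, hrlen⟩ := ha
    rw [isPath_append_iff, hq.target_eq, List.take_left' hqlen]
    exact ⟨⟨⟨hq, hr⟩, by simp; omega⟩, hchain⟩
  · rintro ⟨z, q, r⟩ ha
    simp only [mem_sigma, mem_product, mem_filter, mem_pathsOfLength] at ha
    obtain ⟨-, ⟨⟨hq, hqlen⟩, -⟩, -⟩ := ha
    simp only [List.take_left' hqlen, List.drop_left' hqlen, hq.target_eq]

theorem psiOfLength_eq_expansion {P : G.E → G.E → Prop} {u v : 𝒜}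
    (hP : ∀ e f, G.letter e f = if P e f then u else v) (k : ℕ) (x y : G.V) :
    psiOfLength hfin k x y = chainCount hfin P k x y • (u - v) ^ (k - 1)
      + ∑ m ∈ range (k - 1), (u - v) ^ m * v * ∑ z ∈ midpoints hfin x y,
          chainCount hfin P (m + 1) x z • psiOfLength hfin (k - (m + 1)) z y := by
  have hword : ∀ p ∈ pathsOfLength hfin k x y, G.word p
      = (if p.IsChain P then (u - v) ^ (k - 1) else 0) + ∑ m ∈ range (k - 1), (u - v) ^ m * v *
          (if (p.take (m + 1)).IsChain P then G.word (p.drop (m + 1)) else 0) := fun p hp ↦ by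
    rw [word_eq_expansion hP p, (mem_pathsOfLength.1 hp).2]
  rw [psiOfLength, sum_congr rfl hword, sum_add_distrib, ← sum_filter, sum_const, chainCount,
    sum_comm]
  congr 1
  refine sum_congr rfl fun m hm ↦ ?_
  rw [← mul_sum, ← sum_filter, sum_word_drop_eq hfin P (by have := mem_range.1 hm; omega)]

theorem psiOfLength_eq_ascent_expansion (k : ℕ) (x y : G.V) :
    psiOfLength hfin k x y = chainCount hfin G.ascent k x y • (av - bv) ^ (k - 1)
      + ∑ m ∈ range (k - 1), (av - bv) ^ m * bv * ∑ z ∈ midpoints hfin x y,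
          chainCount hfin G.ascent (m + 1) x z • psiOfLength hfin (k - (m + 1)) z y :=
  psiOfLength_eq_expansion hfin (fun _ _ ↦ rfl) k x y

theorem psiOfLength_eq_descent_expansion (k : ℕ) (x y : G.V) :
    psiOfLength hfin k x y = chainCount hfin G.descent k x y • (bv - av) ^ (k - 1)
      + ∑ m ∈ range (k - 1), (bv - av) ^ m * av * ∑ z ∈ midpoints hfin x y,
          chainCount hfin G.descent (m + 1) x z • psiOfLength hfin (k - (m + 1)) z y :=
  psiOfLength_eq_expansion hfin
    (fun e f ↦ by by_cases h : G.ascent e f <;> simp [letter, descent, h]) k x y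

theorem chainCount_eq_ncard (P : G.E → G.E → Prop) (k : ℕ) (x y : G.V) :
    chainCount hfin P k x y = {p | G.IsPath x p y ∧ p.IsChain P ∧ p.length = k}.ncard := by
  rw [chainCount, ← Set.ncard_coe_finset]
  congr 1
  ext p
  simp only [coe_filter, mem_pathsOfLength, Set.mem_ofPred_eq]
  tauto

theorem pathsOfLength_eq_empty (hacyc : G.Acyclic) {x y : G.V} (hxy : ¬G.Lt x y) {k : ℕ}
    (hk : 0 < k) : pathsOfLength hfin k x y = ∅ := by
  refine eq_empty_iff_forall_notMem.2 fun p hp ↦ ?_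
  obtain ⟨hpath, rfl⟩ := mem_pathsOfLength.1 hp
  obtain rfl : x = y := by_contra fun hne ↦ hxy ⟨⟨p, hpath⟩, hne⟩
  exact hacyc x p (List.ne_nil_of_length_pos hk) hpath

theorem chainCount_ascent_eq_descent_of_even (hacyc : G.Acyclic)
    (hbal : G.EvenBalanced) {k : ℕ} (hk : Even k) (hk0 : 0 < k) (x y : G.V) :
    chainCount hfin G.ascent k x y = chainCount hfin G.descent k x y := by
  by_cases hxy : G.Lt x y
  · rw [chainCount_eq_ncard hfin, chainCount_eq_ncard hfin]
    exact hbal x y hxy k hk hk0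
  · simp [chainCount, pathsOfLength_eq_empty hfin hacyc hxy hk0]

theorem chainCount_ascent_eq_descent_and_abSign (hacyc : G.Acyclic) (hbal : G.EvenBalanced) :
    ∀ k, 1 ≤ k → ∀ x y : G.V,
      chainCount hfin G.ascent k x y = chainCount hfin G.descent k x y ∧
        (Even k → abSign (psiOfLength hfin k x y) = 0) := by
  intro k
  induction k using Nat.strong_induction_on with
  | _ k ih =>
  intro hk x y
  set T : ℕ → ℤ := fun m ↦ ∑ z ∈ midpoints hfin x y,
    (chainCount hfin G.ascent (m + 1) x z : ℤ) * abSign (psiOfLength hfin (k - (m + 1)) z y)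
  have hr : abSign (psiOfLength hfin k x y)
      = chainCount hfin G.ascent k x y * 2 ^ (k - 1) - ∑ m ∈ range (k - 1), 2 ^ m * T m := by
    rw [psiOfLength_eq_ascent_expansion hfin]
    simp [T, map_sum]
    ring
  have hf : abSign (psiOfLength hfin k x y) = chainCount hfin G.descent k x y
      * (-2) ^ (k - 1) + ∑ m ∈ range (k - 1), (-2) ^ m * T m := by
    rw [psiOfLength_eq_descent_expansion hfin]
    simp only [T, map_add, map_pow, map_sub, map_sum, map_mul, abSign_av, abSign_bv,
      nsmul_eq_mul]
    norm_num
    refine sum_congr rfl fun m hm ↦ congrArg _ (sum_congr rfl fun z _ ↦ ?_)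
    rw [(ih (m + 1) (by have := mem_range.1 hm; omega) (by omega) x z).1]
  have hT : ∀ m < k - 1, Odd (m + k) → T m = 0 := by
    rintro m hm ⟨a, ha⟩
    refine sum_eq_zero fun z _ ↦ ?_
    rw [(ih (k - (m + 1)) (by omega) (by omega) z y).2 ⟨a - m, by omega⟩, mul_zero]
  have key := one_add_neg_one_pow_mul_eq hk T hT hr hf
  rcases Nat.even_or_odd k with he | ho
  · have hrf := chainCount_ascent_eq_descent_of_even hfin hacyc hbal he (by omega) x y
    refine ⟨hrf, fun _ ↦ ?_⟩
    rw [he.neg_one_pow, hrf, sub_self, mul_zero] at key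
    linarith
  · refine ⟨?_, fun he ↦ absurd he (Nat.not_even_iff_odd.2 ho)⟩
    rw [ho.neg_one_pow] at key
    simpa [sub_eq_zero] using key

theorem chainCount_ascent_eq_descent (hacyc : G.Acyclic) (hbal : G.EvenBalanced)
    (k : ℕ) (x y : G.V) :
    chainCount hfin G.ascent k x y = chainCount hfin G.descent k x y := by
  rcases Nat.eq_zero_or_pos k with rfl | hk
  · have hnil : ∀ P : G.E → G.E → Prop, ∀ p ∈ pathsOfLength hfin 0 x y, p.IsChain P :=
      fun _ p hp ↦ by simp [List.length_eq_zero_iff.1 (mem_pathsOfLength.1 hp).2]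
    simp only [chainCount, filter_true_of_mem (hnil _)]
  · exact (chainCount_ascent_eq_descent_and_abSign hfin hacyc hbal k hk x y).1

theorem psiOfLength_mem (hacyc : G.Acyclic) (hbal : G.EvenBalanced) (k : ℕ) (x y : G.V) :
    psiOfLength hfin k x y ∈ ℤ⟨c,d⟩ := by
  induction k using Nat.strong_induction_on generalizing x y with
  | _ k ih =>
  have hcount := chainCount_ascent_eq_descent hfin hacyc hbal
  have htwo : (2 : ℤ) • psiOfLength hfin k x y
      = chainCount hfin G.ascent k x y • ((av - bv) ^ (k - 1) + (bv - av) ^ (k - 1))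
        + ∑ m ∈ range (k - 1), ((av - bv) ^ m * bv + (bv - av) ^ m * av) *
            ∑ z ∈ midpoints hfin x y,
              chainCount hfin G.ascent (m + 1) x z • psiOfLength hfin (k - (m + 1)) z y := by
    rw [two_zsmul]
    nth_rewrite 1 [psiOfLength_eq_ascent_expansion hfin]
    rw [psiOfLength_eq_descent_expansion hfin]
    simp only [← hcount, smul_add, add_mul, sum_add_distrib]
    abel
  refine mem_closure_cv_dv_of_smul_mem two_ne_zero ?_
  rw [htwo]
  refine add_mem (nsmul_mem (sub_pow_add_sub_pow_mem _) _) (sum_mem fun m hm ↦ ?_)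
  refine mul_mem (sub_pow_mul_add_sub_pow_mul_mem m) (sum_mem fun z _ ↦ nsmul_mem ?_ _)
  exact ih _ (by have := mem_range.1 hm; omega) z y

theorem Psi_eq_sum_psiOfLength (x y : G.V) :
    G.Psi x y = ∑ k ∈ range ((paths hfin x y).sup List.length + 1), psiOfLength hfin k x y := by
  change ∑ᶠ p ∈ {p | G.IsPath x p y}, G.word p = _
  rw [← (hfin x y).coe_toFinset, finsum_mem_coe_finset]
  exact (sum_fiberwise_of_maps_to (fun p hp ↦ mem_range.2 (Nat.lt_succ_of_le (le_sup hp))) _).symm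

end LDigraph

/-- Theorem 4.6, (ii) ⟹ (iii): if for every interval and every even positive length
`k` the number of rising paths of length `k` equals the number of falling paths of
length `k`, then the `ab`-index of every interval lies in `Z⟨c,d⟩`. -/
theorem cd_of_even_rising_eq_falling (G : LDigraph) (hacyclic : G.Acyclic)
    (hlocfin : G.LocallyFinite)
    (hbal : ∀ x y : G.V, G.Lt x y → ∀ k : ℕ, Even k → 0 < k →
      {p | G.IsPath x p y ∧ G.Rising p ∧ p.length = k}.ncard =
        {p | G.IsPath x p y ∧ G.Falling p ∧ p.length = k}.ncard) :
    ∀ x y : G.V, G.Lt x y →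
      G.Psi x y ∈
        Subring.closure ({cv, dv} : Set (MonoidAlgebra ℤ (FreeMonoid (Fin 2)))) := by
  intro x y _
  rw [G.Psi_eq_sum_psiOfLength hlocfin x y]
  exact sum_mem fun k _ ↦ G.psiOfLength_mem hlocfin hacyclic hbal k x y
end
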